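/- Let n ≥ 5. The subgraph Γ(V) of the block transposition graph Γ induced on the vertex set V is Hamiltonian: it contains a cycle passing through every vertex of V exactly once. -/

import Mathlib

/-- Auxiliary function: the action of the block transposition with cut points
`(i,j,k)` on `{1,…,n}`, written 1-based. -/
def btFun (i j k t : ℕ) : ℕ :=
  if t ≤ i ∨ k < t then t
  else if t ≤ k - j + i then t + j - i
  else t + j - k

theorem btFun_lb {i j k t : ℕ} (h1 : 1 ≤ t) : 1 ≤ btFun i j k t := by
  unfold btFun; split_ifs <;> omega

theorem btFun_ub {i j k t n : ℕ} (ht : t ≤ n) (hjk : j ≤ k) (hkn : k ≤ n) :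
    btFun i j k t ≤ n := by
  unfold btFun; split_ifs <;> omega

theorem btFun_inv {i j k : ℕ} (hij : i < j) (hjk : j < k) (t : ℕ) :
    btFun i (k - j + i) k (btFun i j k t) = t := by
  unfold btFun; split_ifs <;> omega

theorem btFun_inv' {i j k : ℕ} (hij : i < j) (hjk : j < k) (t : ℕ) :
    btFun i j k (btFun i (k - j + i) k t) = t := by
  have h := btFun_inv (i := i) (j := k - j + i) (k := k) (by omega) (by omega) t
  have e : k - (k - j + i) + i = j := by omega
  rwa [e] at h

/-- The block transposition `σ(i,j,k)` as a permutation of `Fin n`,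
where `t : Fin n` encodes the element `t.val + 1` of `{1,…,n}`. -/
def blockT (n i j k : ℕ) (hij : i < j) (hjk : j < k) (hkn : k ≤ n) :
    Equiv.Perm (Fin n) where
  toFun t := ⟨btFun i j k (t.1 + 1) - 1, by
    have h0 := t.isLt
    have h1 := btFun_lb (i := i) (j := j) (k := k) (t := t.1 + 1) (by omega)
    have h2 := btFun_ub (i := i) (j := j) (k := k) (t := t.1 + 1) (n := n)
      (by omega) (by omega) hkn
    omega⟩
  invFun t := ⟨btFun i (k - j + i) k (t.1 + 1) - 1, by
    have h0 := t.isLt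
    have h1 := btFun_lb (i := i) (j := k - j + i) (k := k) (t := t.1 + 1) (by omega)
    have h2 := btFun_ub (i := i) (j := k - j + i) (k := k) (t := t.1 + 1) (n := n)
      (by omega) (by omega) hkn
    omega⟩
  left_inv t := by
    have h1 := btFun_lb (i := i) (j := j) (k := k) (t := t.1 + 1) (by omega)
    have h2 := btFun_inv hij hjk (t.1 + 1)
    apply Fin.ext
    simp only
    have h3 : btFun i j k (t.1 + 1) - 1 + 1 = btFun i j k (t.1 + 1) := by omega
    rw [h3, h2]
    omega
  right_inv t := by
    have h1 := btFun_lb (i := i) (j := k - j + i) (k := k) (t := t.1 + 1) (by omega)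
    have h2 := btFun_inv' hij hjk (t.1 + 1)
    apply Fin.ext
    simp only
    have h3 : btFun i (k - j + i) k (t.1 + 1) - 1 + 1 = btFun i (k - j + i) k (t.1 + 1) := by
      omega
    rw [h3, h2]
    omega

/-- `T_n`: the set of all block transpositions on `{1,…,n}`. -/
def blockTranspositions (n : ℕ) : Set (Equiv.Perm (Fin n)) :=
  {π | ∃ (i j k : ℕ) (hij : i < j) (hjk : j < k) (hkn : k ≤ n),
      blockT n i j k hij hjk hkn = π}

theorem blockT_inv {n i j k : ℕ} (hij : i < j) (hjk : j < k) (hkn : k ≤ n) :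
    (blockT n i j k hij hjk hkn)⁻¹
      = blockT n i (k - j + i) k (by omega) (by omega) hkn :=
  Equiv.ext fun _ => rfl

theorem blockTranspositions_inv_mem {n : ℕ} {π : Equiv.Perm (Fin n)}
    (h : π ∈ blockTranspositions n) : π⁻¹ ∈ blockTranspositions n := by
  obtain ⟨i, j, k, hij, hjk, hkn, rfl⟩ := h
  exact ⟨i, k - j + i, k, by omega, by omega, hkn, (blockT_inv hij hjk hkn).symm⟩

/-- The Cayley graph `Cay(Sym_n, T_n)`. -/
def cayleyT (n : ℕ) : SimpleGraph (Equiv.Perm (Fin n)) where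
  Adj π ρ := π ≠ ρ ∧ π⁻¹ * ρ ∈ blockTranspositions n
  symm := by
    constructor
    rintro π ρ ⟨hne, hmem⟩
    refine ⟨hne.symm, ?_⟩
    have h := blockTranspositions_inv_mem hmem
    rwa [mul_inv_rev, inv_inv] at h
  loopless := ⟨fun π h => h.1 rfl⟩
/-- The pair `e_m`, `0 ≤ m ≤ n`. -/
def epair (n : ℕ) (hn : 5 ≤ n) (m : ℕ) (hm : m ≤ n) : Set (Equiv.Perm (Fin n)) :=
  if h : m ≤ n - 3 then
    {blockT n m (m + 1) (m + 3) (by omega) (by omega) (by omega),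
     blockT n m (m + 2) (m + 3) (by omega) (by omega) (by omega)}
  else if h2 : m = n - 2 then
    {blockT n 0 (n - 2) (n - 1) (by omega) (by omega) (by omega),
     blockT n 0 (n - 2) n (by omega) (by omega) (by omega)}
  else if h3 : m = n - 1 then
    {blockT n 1 (n - 1) n (by omega) (by omega) (by omega),
     blockT n 0 1 (n - 1) (by omega) (by omega) (by omega)}
  else
    {blockT n 0 2 n (by omega) (by omega) (by omega),
     blockT n 1 2 n (by omega) (by omega) (by omega)}

/-- `V`: the set of the `2(n+1)` endpoints of the pairs `e_0, …, e_n`. -/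
def Vset (n : ℕ) (hn : 5 ≤ n) : Set (Equiv.Perm (Fin n)) :=
  {π | ∃ (m : ℕ) (hm : m ≤ n), π ∈ epair n hn m hm}

/-!
Write `a_m = epairFst hn m` and `b_m = epairSnd hn m` for the two endpoints of `e_m`. Then
`b_0, a_0, b_1, a_1, …, b_n, a_n, b_0` is a Hamiltonian cycle of `Γ(V)`: consecutive vertices
differ by a block transposition (checked by composing the cut-point maps), and the `2(n+1)`
vertices are distinct because a block transposition determines its cut points.
-/

open Function Equiv

namespace SimpleGraph

theorem cycleGraph.isHamiltonianCycle_cycle (n : ℕ) : (cycleGraph.cycle n).IsHamiltonianCycle :=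
  Walk.isHamiltonianCycle_iff_isCycle_and_length_eq.2
    ⟨cycleGraph.isCycle_cycle, by rw [cycleGraph.length_cycle, Fintype.card_fin]⟩

theorem exists_isHamiltonianCycle_of_bijective {V : Type*} [DecidableEq V] {G : SimpleGraph V}
    {N : ℕ} (hN : 3 ≤ N) (f : Fin N → V) (hf : Bijective f)
    (hadj : ∀ u v : Fin N, v.val = (u.val + 1) % N → G.Adj (f u) (f v)) :
    ∃ (v : V) (p : G.Walk v v), p.IsHamiltonianCycle := by
  obtain ⟨k, rfl⟩ : ∃ k, N = k + 3 := ⟨N - 3, by omega⟩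
  have hsub : ∀ u v : Fin (k + 3), u - v = 1 → G.Adj (f v) (f u) := by
    intro u v h
    rw [sub_eq_iff_eq_add'] at h
    exact hadj v u (by rw [h, Fin.val_add, Fin.val_one])
  let φ : cycleGraph (k + 3) →g G :=
    ⟨f, fun h => h.elim (fun h => (hsub _ _ h).symm) (hsub _ _)⟩
  exact ⟨_, _, (cycleGraph.isHamiltonianCycle_cycle k).map (f := φ) hf⟩

end SimpleGraph

section BlockTransposition

variable {n i j k i' j' k' : ℕ}

theorem blockT_apply_val (hij : i < j) (hjk : j < k) (hkn : k ≤ n) (t : Fin n) :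
    (blockT n i j k hij hjk hkn t : ℕ) + 1 = btFun i j k (t + 1) := by
  have := btFun_lb (i := i) (j := j) (k := k) (Nat.le_add_left 1 t)
  show btFun i j k (t + 1) - 1 + 1 = _
  omega

theorem btFun_eqOn_of_blockT_eq {hij : i < j} {hjk : j < k} {hkn : k ≤ n}
    {hij' : i' < j'} {hjk' : j' < k'} {hkn' : k' ≤ n}
    (h : blockT n i j k hij hjk hkn = blockT n i' j' k' hij' hjk' hkn') :
    ∀ t, 1 ≤ t → t ≤ n → btFun i j k t = btFun i' j' k' t := by
  intro t ht htn
  have h₁ := blockT_apply_val hij hjk hkn ⟨t - 1, by omega⟩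
  have h₂ := blockT_apply_val hij' hjk' hkn' ⟨t - 1, by omega⟩
  rw [h] at h₁
  simp only [Nat.sub_add_cancel ht] at h₁ h₂
  omega

/-- `i` is the last point fixed before the first moved one, `k` the first point after which all
points are fixed. -/
theorem le_and_le_of_btFun_eqOn (hij : i < j) (hjk : j < k) (hkn : k ≤ n)
    (hij' : i' < j') (hjk' : j' < k')
    (h : ∀ t, 1 ≤ t → t ≤ n → btFun i j k t = btFun i' j' k' t) : i' ≤ i ∧ k ≤ k' := by
  constructor
  · by_contra hlt
    have := h (i + 1) (by omega) (by omega)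
    unfold btFun at this; split_ifs at this <;> omega
  · by_contra hlt
    have := h k (by omega) hkn
    unfold btFun at this; split_ifs at this <;> omega

theorem blockT_inj {hij : i < j} {hjk : j < k} {hkn : k ≤ n}
    {hij' : i' < j'} {hjk' : j' < k'} {hkn' : k' ≤ n} :
    blockT n i j k hij hjk hkn = blockT n i' j' k' hij' hjk' hkn' ↔
      i = i' ∧ j = j' ∧ k = k' := by
  refine ⟨fun h => ?_, fun ⟨hi, hj, hk⟩ => by subst hi hj hk; rfl⟩
  have heq := btFun_eqOn_of_blockT_eq h
  obtain ⟨hi, hk⟩ := le_and_le_of_btFun_eqOn hij hjk hkn hij' hjk' heq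
  obtain ⟨hi', hk'⟩ :=
    le_and_le_of_btFun_eqOn hij' hjk' hkn' hij hjk fun t ht htn => (heq t ht htn).symm
  have := heq (i + 1) (by omega) (by omega)
  unfold btFun at this; split_ifs at this <;> omega

theorem blockT_ne_one (hij : i < j) (hjk : j < k) (hkn : k ≤ n) :
    blockT n i j k hij hjk hkn ≠ 1 := by
  intro h
  have := blockT_apply_val hij hjk hkn ⟨i, by omega⟩
  rw [h, Perm.one_apply] at this
  dsimp only at this
  unfold btFun at this; split_ifs at this <;> omega

theorem cayleyT_adj_mul_blockT (π : Perm (Fin n)) (hij : i < j) (hjk : j < k) (hkn : k ≤ n) :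
    (cayleyT n).Adj π (π * blockT n i j k hij hjk hkn) :=
  ⟨fun h => blockT_ne_one hij hjk hkn (left_eq_mul.1 h),
    ⟨i, j, k, hij, hjk, hkn, (inv_mul_cancel_left π _).symm⟩⟩

theorem cayleyT_adj_blockT {i'' j'' k'' : ℕ} {hij : i < j} {hjk : j < k} {hkn : k ≤ n}
    {hij'' : i'' < j''} {hjk'' : j'' < k''} {hkn'' : k'' ≤ n}
    (hij' : i' < j') (hjk' : j' < k') (hkn' : k' ≤ n)
    (h : ∀ t, 1 ≤ t → t ≤ n → btFun i j k (btFun i' j' k' t) = btFun i'' j'' k'' t) :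
    (cayleyT n).Adj (blockT n i j k hij hjk hkn) (blockT n i'' j'' k'' hij'' hjk'' hkn'') := by
  convert cayleyT_adj_mul_blockT (blockT n i j k hij hjk hkn) hij' hjk' hkn' using 1
  ext t
  have h₁ := blockT_apply_val hij hjk hkn (blockT n i' j' k' hij' hjk' hkn' t)
  have h₂ := blockT_apply_val hij' hjk' hkn' t
  have h₃ := blockT_apply_val hij'' hjk'' hkn'' t
  rw [h₂, h (t + 1) (by omega) (by omega)] at h₁
  rw [Perm.mul_apply]
  omega

end BlockTransposition

section Endpoints

variable {n : ℕ} (hn : 5 ≤ n)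

def epairFst (m : ℕ) : Perm (Fin n) :=
  if h₁ : m ≤ n - 3 then blockT n m (m + 1) (m + 3) (by omega) (by omega) (by omega)
  else if h₂ : m = n - 2 then blockT n 0 (n - 2) (n - 1) (by omega) (by omega) (by omega)
  else if h₃ : m = n - 1 then blockT n 1 (n - 1) n (by omega) (by omega) (by omega)
  else blockT n 0 2 n (by omega) (by omega) (by omega)

def epairSnd (m : ℕ) : Perm (Fin n) :=
  if h₁ : m ≤ n - 3 then blockT n m (m + 2) (m + 3) (by omega) (by omega) (by omega)
  else if h₂ : m = n - 2 then blockT n 0 (n - 2) n (by omega) (by omega) (by omega)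
  else if h₃ : m = n - 1 then blockT n 0 1 (n - 1) (by omega) (by omega) (by omega)
  else blockT n 1 2 n (by omega) (by omega) (by omega)

theorem epair_eq_pair {m : ℕ} (hm : m ≤ n) :
    epair n hn m hm = {epairFst hn m, epairSnd hn m} := by
  unfold epair epairFst epairSnd
  split_ifs <;> rfl

theorem epairFst_mem_Vset {m : ℕ} (hm : m ≤ n) : epairFst hn m ∈ Vset n hn :=
  ⟨m, hm, by rw [epair_eq_pair]; exact Set.mem_insert _ _⟩

theorem epairSnd_mem_Vset {m : ℕ} (hm : m ≤ n) : epairSnd hn m ∈ Vset n hn :=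
  ⟨m, hm, by rw [epair_eq_pair]; exact Set.mem_insert_of_mem _ rfl⟩

variable {hn}

theorem epairFst_inj {m m' : ℕ} (hm : m ≤ n) (hm' : m' ≤ n)
    (h : epairFst hn m = epairFst hn m') : m = m' := by
  unfold epairFst at h
  split_ifs at h <;> (obtain ⟨_, _, _⟩ := blockT_inj.1 h; omega)

theorem epairSnd_inj {m m' : ℕ} (hm : m ≤ n) (hm' : m' ≤ n)
    (h : epairSnd hn m = epairSnd hn m') : m = m' := by
  unfold epairSnd at h
  split_ifs at h <;> (obtain ⟨_, _, _⟩ := blockT_inj.1 h; omega)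

theorem epairFst_ne_epairSnd (m m' : ℕ) :
    epairFst hn m ≠ epairSnd hn m' := by
  intro h
  unfold epairFst epairSnd at h
  split_ifs at h <;> (obtain ⟨_, _, _⟩ := blockT_inj.1 h; omega)

theorem epairFst_of_le {m : ℕ} (h : m ≤ n - 3) :
    epairFst hn m = blockT n m (m + 1) (m + 3) (by omega) (by omega) (by omega) := by
  rw [epairFst, dif_pos h]

theorem epairFst_of_eq_sub_two {m : ℕ} (h : m = n - 2) :
    epairFst hn m = blockT n 0 (n - 2) (n - 1) (by omega) (by omega) (by omega) := by
  rw [epairFst, dif_neg (by omega), dif_pos h]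

theorem epairFst_of_eq_sub_one {m : ℕ} (h : m = n - 1) :
    epairFst hn m = blockT n 1 (n - 1) n (by omega) (by omega) (by omega) := by
  rw [epairFst, dif_neg (by omega), dif_neg (by omega), dif_pos h]

theorem epairFst_of_eq {m : ℕ} (h : m = n) :
    epairFst hn m = blockT n 0 2 n (by omega) (by omega) (by omega) := by
  rw [epairFst, dif_neg (by omega), dif_neg (by omega), dif_neg (by omega)]

theorem epairSnd_of_le {m : ℕ} (h : m ≤ n - 3) :
    epairSnd hn m = blockT n m (m + 2) (m + 3) (by omega) (by omega) (by omega) := by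
  rw [epairSnd, dif_pos h]

theorem epairSnd_of_eq_sub_two {m : ℕ} (h : m = n - 2) :
    epairSnd hn m = blockT n 0 (n - 2) n (by omega) (by omega) (by omega) := by
  rw [epairSnd, dif_neg (by omega), dif_pos h]

theorem epairSnd_of_eq_sub_one {m : ℕ} (h : m = n - 1) :
    epairSnd hn m = blockT n 0 1 (n - 1) (by omega) (by omega) (by omega) := by
  rw [epairSnd, dif_neg (by omega), dif_neg (by omega), dif_pos h]

theorem epairSnd_of_eq {m : ℕ} (h : m = n) :
    epairSnd hn m = blockT n 1 2 n (by omega) (by omega) (by omega) := by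
  rw [epairSnd, dif_neg (by omega), dif_neg (by omega), dif_neg (by omega)]

theorem cayleyT_adj_epairFst_epairSnd {m : ℕ} (hm : m ≤ n) :
    (cayleyT n).Adj (epairFst hn m) (epairSnd hn m) := by
  obtain hc | hc | hc | hc : m ≤ n - 3 ∨ m = n - 2 ∨ m = n - 1 ∨ m = n := by omega
  · rw [epairFst_of_le hc, epairSnd_of_le hc]
    exact cayleyT_adj_blockT (i' := m) (j' := m + 1) (k' := m + 3) (by omega) (by omega)
      (by omega) (by intro t _ _; unfold btFun; split_ifs <;> omega)
  · rw [epairFst_of_eq_sub_two hc, epairSnd_of_eq_sub_two hc]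
    exact cayleyT_adj_blockT (i' := 1) (j' := n - 1) (k' := n) (by omega) (by omega)
      (by omega) (by intro t _ _; unfold btFun; split_ifs <;> omega)
  · rw [epairFst_of_eq_sub_one hc, epairSnd_of_eq_sub_one hc]
    exact cayleyT_adj_blockT (i' := 0) (j' := 2) (k' := n) (by omega) (by omega)
      (by omega) (by intro t _ _; unfold btFun; split_ifs <;> omega)
  · rw [epairFst_of_eq hc, epairSnd_of_eq hc]
    exact cayleyT_adj_blockT (i' := 0) (j' := n - 2) (k' := n - 1) (by omega) (by omega)
      (by omega) (by intro t _ _; unfold btFun; split_ifs <;> omega)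

theorem cayleyT_adj_epairFst_epairSnd_succ {m : ℕ} (hm : m + 1 ≤ n) :
    (cayleyT n).Adj (epairFst hn m) (epairSnd hn (m + 1)) := by
  obtain hc | hc | hc | hc :
      m + 1 ≤ n - 3 ∨ m + 1 = n - 2 ∨ m + 1 = n - 1 ∨ m + 1 = n := by omega
  · rw [epairFst_of_le (by omega), epairSnd_of_le hc]
    exact cayleyT_adj_blockT (i' := m) (j' := m + 2) (k' := m + 4) (by omega) (by omega)
      (by omega) (by intro t _ _; unfold btFun; split_ifs <;> omega)
  · rw [epairFst_of_le (by omega), epairSnd_of_eq_sub_two hc]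
    exact cayleyT_adj_blockT (i' := 0) (j' := n - 3) (k' := n - 1) (by omega) (by omega)
      (by omega) (by intro t _ _; unfold btFun; split_ifs <;> omega)
  · rw [epairFst_of_eq_sub_two (by omega), epairSnd_of_eq_sub_one hc]
    exact cayleyT_adj_blockT (i' := 0) (j' := 2) (k' := n - 1) (by omega) (by omega)
      (by omega) (by intro t _ _; unfold btFun; split_ifs <;> omega)
  · rw [epairFst_of_eq_sub_one (by omega), epairSnd_of_eq hc]
    exact cayleyT_adj_blockT (i' := 1) (j' := 3) (k' := n) (by omega) (by omega)
      (by omega) (by intro t _ _; unfold btFun; split_ifs <;> omega)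

theorem cayleyT_adj_epairFst_self_epairSnd_zero :
    (cayleyT n).Adj (epairFst hn n) (epairSnd hn 0) := by
  rw [epairFst_of_eq rfl, epairSnd_of_le (by omega)]
  exact cayleyT_adj_blockT (i' := 1) (j' := n - 2) (k' := n) (by omega) (by omega)
    (by omega) (by intro t _ _; unfold btFun; split_ifs <;> omega)

end Endpoints

section HamiltonianCycle

variable {n : ℕ} (hn : 5 ≤ n)

def cycleSeq (k : ℕ) : Perm (Fin n) :=
  if k % 2 = 0 then epairSnd hn (k / 2) else epairFst hn (k / 2)

theorem cycleSeq_two_mul (m : ℕ) : cycleSeq hn (2 * m) = epairSnd hn m := by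
  rw [cycleSeq, if_pos (by omega), Nat.mul_div_cancel_left m two_pos]

theorem cycleSeq_two_mul_add_one (m : ℕ) : cycleSeq hn (2 * m + 1) = epairFst hn m := by
  rw [cycleSeq, if_neg (by omega)]
  congr 1
  omega

theorem cycleSeq_mem_Vset {k : ℕ} (hk : k < 2 * n + 2) : cycleSeq hn k ∈ Vset n hn := by
  obtain ⟨m, rfl | rfl⟩ := Nat.even_or_odd' k
  · rw [cycleSeq_two_mul]; exact epairSnd_mem_Vset hn (by omega)
  · rw [cycleSeq_two_mul_add_one]; exact epairFst_mem_Vset hn (by omega)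

variable {hn}

theorem exists_cycleSeq_eq {π : Perm (Fin n)} (hπ : π ∈ Vset n hn) :
    ∃ k < 2 * n + 2, cycleSeq hn k = π := by
  obtain ⟨m, hm, hπ⟩ := hπ
  rw [epair_eq_pair] at hπ
  rcases hπ with rfl | rfl
  · exact ⟨2 * m + 1, by omega, cycleSeq_two_mul_add_one hn m⟩
  · exact ⟨2 * m, by omega, cycleSeq_two_mul hn m⟩

theorem cycleSeq_injOn : Set.InjOn (cycleSeq hn) (Set.Iio (2 * n + 2)) := by
  intro k hk k' hk' h
  simp only [Set.mem_Iio] at hk hk'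
  obtain ⟨m, rfl | rfl⟩ := Nat.even_or_odd' k <;> obtain ⟨m', rfl | rfl⟩ := Nat.even_or_odd' k'
  all_goals simp only [cycleSeq_two_mul, cycleSeq_two_mul_add_one] at h
  · rw [epairSnd_inj (by omega) (by omega) h]
  · exact absurd h.symm (epairFst_ne_epairSnd m' m)
  · exact absurd h (epairFst_ne_epairSnd m m')
  · rw [epairFst_inj (by omega) (by omega) h]

theorem cayleyT_adj_cycleSeq {k : ℕ} (hk : k < 2 * n + 2) :
    (cayleyT n).Adj (cycleSeq hn k) (cycleSeq hn ((k + 1) % (2 * n + 2))) := by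
  obtain hlast | hlt : k = 2 * n + 1 ∨ k + 1 < 2 * n + 2 := by omega
  · rw [hlast, Nat.add_assoc, Nat.mod_self, cycleSeq_two_mul_add_one, ← Nat.mul_zero 2,
      cycleSeq_two_mul]
    exact cayleyT_adj_epairFst_self_epairSnd_zero
  rw [Nat.mod_eq_of_lt hlt]
  obtain ⟨m, rfl | rfl⟩ := Nat.even_or_odd' k
  · rw [cycleSeq_two_mul, cycleSeq_two_mul_add_one]
    exact (cayleyT_adj_epairFst_epairSnd (by omega)).symm
  · rw [cycleSeq_two_mul_add_one, show 2 * m + 1 + 1 = 2 * (m + 1) by ring, cycleSeq_two_mul]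
    exact cayleyT_adj_epairFst_epairSnd_succ (by omega)

end HamiltonianCycle

/-- For `n ≥ 5`, the induced subgraph `Γ(V)` is Hamiltonian: it
contains a cycle passing through every vertex of `V` exactly once. -/
theorem stmt_18 (n : ℕ) (hn : 5 ≤ n) :
    ∃ (v : Vset n hn)
      (p : (SimpleGraph.induce (Vset n hn) (cayleyT n)).Walk v v),
      p.IsHamiltonianCycle := by
  let f : Fin (2 * n + 2) → Vset n hn := fun k => ⟨cycleSeq hn k, cycleSeq_mem_Vset hn k.isLt⟩
  refine SimpleGraph.exists_isHamiltonianCycle_of_bijective (by omega) f ⟨?_, ?_⟩ ?_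
  · intro u v h
    exact Fin.ext (cycleSeq_injOn u.isLt v.isLt (congrArg Subtype.val h))
  · rintro ⟨π, hπ⟩
    obtain ⟨k, hk, rfl⟩ := exists_cycleSeq_eq hπ
    exact ⟨⟨k, hk⟩, rfl⟩
  · intro u v h
    rw [SimpleGraph.induce_adj]
    simp only [f, h]
    exact cayleyT_adj_cycleSeq u.isLt
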